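/- Every principal minor of an invertible totally nonnegative matrix is positive. -/

import Mathlib

/-- A square real matrix is totally nonnegative if all its minors are nonnegative. -/
def TotallyNonneg {n : ℕ} (A : Matrix (Fin n) (Fin n) ℝ) : Prop :=
  ∀ (k : ℕ) (r c : Fin k → Fin n), StrictMono r → StrictMono c →
    0 ≤ (A.submatrix r c).det

/-!
Write `A(i|j)` for `A` with row `i` and column `j` deleted (`A.submatrix i.succAbove j.succAbove`)
and `N` for the last index. The Desnanot–Jacobi identity reads
`det A * det A({i,N}|{j,N}) = det A(i|j) * det A(N|N) - det A(i|N) * det A(N|j)`.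
If `det A(N|N) = 0`, the left side is `≥ 0` and the right side `≤ 0` by total nonnegativity, so
`det A(i|N) * det A(N|j) = 0` for all `i, j`, which contradicts the Laplace expansions of
`det A ≠ 0` along row and column `N`. Hence `A(N|N)` is invertible and totally nonnegative, and by
induction on the size its principal minors `det A({i,N}|{i,N})` are positive; the identity with
`i = j` then gives `det A(i|i) * det A(N|N) > 0`. So every `A(i|i)` is again invertible and
totally nonnegative, and a second induction on the size reaches all principal minors.
-/

open Matrix Function

namespace Matrix

variable {n R : Type*} [Fintype n] [DecidableEq n] [CommRing R]

theorem det_one_updateCol_updateCol {j l : n} (hjl : j ≠ l) (u v : n → R) :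
    det (((1 : Matrix n n R).updateCol j u).updateCol l v) = u j * v l - u l * v j := by
  -- a rank-two perturbation of `1`, so `det (1 + X * Y) = det (1 + Y * X)` reduces it to `2 × 2`
  let X : Matrix n (Fin 2) R :=
    of fun p => ![u p - (Pi.single j 1 : n → R) p, v p - (Pi.single l 1 : n → R) p]
  let Y : Matrix (Fin 2) n R := of ![Pi.single j 1, Pi.single l 1]
  have hXY : ((1 : Matrix n n R).updateCol j u).updateCol l v = 1 + X * Y := by
    ext p q
    simp only [X, Y, updateCol_apply, add_apply, mul_apply, Fin.sum_univ_two, of_apply, one_apply,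
      Pi.single_apply]
    split_ifs <;> simp_all
  have hYX : 1 + Y * X = !![u j, v j; u l, v l] := by
    ext a b
    fin_cases a <;> fin_cases b <;> simp [X, Y, hjl, hjl.symm]
  rw [hXY, det_one_add_mul_comm, hYX, det_fin_two_of]
  ring

theorem det_mul_det_updateCol_single_updateCol_single [IsDomain R] {A : Matrix n n R}
    (hA : A.det ≠ 0) (i k : n) {j l : n} (hjl : j ≠ l) :
    A.det * det ((A.updateCol j (Pi.single i 1)).updateCol l (Pi.single k 1)) =
      det (A.updateCol j (Pi.single i 1)) * det (A.updateCol l (Pi.single k 1)) -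
        det (A.updateCol l (Pi.single i 1)) * det (A.updateCol j (Pi.single k 1)) := by
  -- the columns of `C` are Cramer's solutions of `A x = det A • eᵢ`, `A x = det A • eₖ`
  let C := ((1 : Matrix n n R).updateCol j (A.cramer (Pi.single i 1))).updateCol l
    (A.cramer (Pi.single k 1))
  have hAC : A * C =
      (A.updateCol j (A.det • Pi.single i 1)).updateCol l (A.det • Pi.single k 1) := by
    rw [mul_updateCol, mul_updateCol, mul_one, mulVec_cramer, mulVec_cramer]
  have key := det_mul A C
  rw [hAC, det_updateCol_smul, updateCol_comm _ hjl, det_updateCol_smul,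
    updateCol_comm _ hjl.symm, det_one_updateCol_updateCol hjl] at key
  simp only [cramer_apply] at key
  exact mul_left_cancel₀ hA (by linear_combination key)

theorem det_updateCol_single {m : ℕ} (A : Matrix (Fin (m + 1)) (Fin (m + 1)) R)
    (i j : Fin (m + 1)) :
    det (A.updateCol j (Pi.single i 1)) =
      (-1) ^ (i + j : ℕ) * det (A.submatrix i.succAbove j.succAbove) := by
  rw [← cramer_apply, cramer_eq_adjugate_mulVec, mulVec_single_one, col_apply,
    adjugate_fin_succ_eq_det_submatrix]

theorem det_updateCol_single_updateCol_single {m : ℕ}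
    (A : Matrix (Fin (m + 2)) (Fin (m + 2)) R) (k l : Fin (m + 2)) (i j : Fin (m + 1)) :
    det ((A.updateCol (l.succAbove j) (Pi.single (k.succAbove i) 1)).updateCol l
        (Pi.single k 1)) =
      (-1) ^ (k + l : ℕ) * (-1) ^ (i + j : ℕ) *
        det (A.submatrix (k.succAbove ∘ i.succAbove) (l.succAbove ∘ j.succAbove)) := by
  have hsub : (A.updateCol (l.succAbove j) (Pi.single (k.succAbove i) 1)).submatrix
      k.succAbove l.succAbove =
        (A.submatrix k.succAbove l.succAbove).updateCol j (Pi.single i 1) := by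
    ext p q
    simp [updateCol_apply, Pi.single_apply, Fin.succAbove_right_injective.eq_iff]
  rw [det_updateCol_single, hsub, det_updateCol_single, submatrix_submatrix, mul_assoc]

theorem desnanot_jacobi [IsDomain R] {m : ℕ} {A : Matrix (Fin (m + 2)) (Fin (m + 2)) R}
    (hA : A.det ≠ 0) {k l : Fin (m + 2)} {i j : Fin (m + 1)} (hi : i.castSucc < k)
    (hj : j.castSucc < l) :
    A.det * det (A.submatrix (k.succAbove ∘ i.succAbove) (l.succAbove ∘ j.succAbove)) =
      det (A.submatrix i.castSucc.succAbove j.castSucc.succAbove) *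
          det (A.submatrix k.succAbove l.succAbove) -
        det (A.submatrix i.castSucc.succAbove l.succAbove) *
          det (A.submatrix k.succAbove j.castSucc.succAbove) := by
  have h := det_mul_det_updateCol_single_updateCol_single hA i.castSucc k hj.ne
  have hdouble := det_updateCol_single_updateCol_single A k l i j
  rw [Fin.succAbove_of_castSucc_lt _ _ hi, Fin.succAbove_of_castSucc_lt _ _ hj] at hdouble
  simp only [hdouble, det_updateCol_single, Fin.val_castSucc] at h
  have hsign : ∀ a b c d : ℕ, a + b + c + d = i + j + k + l →
      (-1 : R) ^ (a + b) * (-1) ^ (c + d) = (-1) ^ (i + j + k + l : ℕ) := fun a b c d h => by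
    rw [← pow_add, ← add_assoc, h]
  rw [mul_mul_mul_comm, mul_mul_mul_comm ((-1) ^ (i + l : ℕ)), hsign _ _ _ _ (by ring),
    hsign _ _ _ _ (by ring), hsign _ _ _ _ (by ring), ← mul_sub, mul_left_comm] at h
  exact mul_left_cancel₀ (pow_ne_zero _ (neg_ne_zero.mpr one_ne_zero)) h

theorem desnanot_jacobi_last [IsDomain R] {m : ℕ} {A : Matrix (Fin (m + 2)) (Fin (m + 2)) R}
    (hA : A.det ≠ 0) (i j : Fin (m + 1)) :
    A.det * det ((A.submatrix Fin.castSucc Fin.castSucc).submatrix i.succAbove j.succAbove) =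
      det (A.submatrix i.castSucc.succAbove j.castSucc.succAbove) *
          det (A.submatrix Fin.castSucc Fin.castSucc) -
        det (A.submatrix i.castSucc.succAbove Fin.castSucc) *
          det (A.submatrix Fin.castSucc j.castSucc.succAbove) := by
  simpa [submatrix_submatrix] using
    desnanot_jacobi hA (Fin.castSucc_lt_last i) (Fin.castSucc_lt_last j)

theorem exists_det_submatrix_succAbove_ne_zero_left {m : ℕ}
    {A : Matrix (Fin (m + 1)) (Fin (m + 1)) R} (hA : A.det ≠ 0) (j : Fin (m + 1)) :
    ∃ i : Fin (m + 1), det (A.submatrix i.succAbove j.succAbove) ≠ 0 := by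
  by_contra! h
  exact hA (by simp [det_succ_column A j, h])

theorem exists_det_submatrix_succAbove_ne_zero_right {m : ℕ}
    {A : Matrix (Fin (m + 1)) (Fin (m + 1)) R} (hA : A.det ≠ 0) (i : Fin (m + 1)) :
    ∃ j : Fin (m + 1), det (A.submatrix i.succAbove j.succAbove) ≠ 0 := by
  by_contra! h
  exact hA (by simp [det_succ_row A i, h])

end Matrix

theorem StrictMono.exists_eq_succAbove_comp {k n : ℕ} {r : Fin k → Fin (n + 1)}
    (hr : StrictMono r) (hs : ¬ Surjective r) :
    ∃ (j : Fin (n + 1)) (r' : Fin k → Fin n), StrictMono r' ∧ r = j.succAbove ∘ r' := by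
  obtain ⟨j, hj⟩ : ∃ j, ∀ a, r a ≠ j := by simpa [Surjective] using hs
  choose r' hr' using fun a => Fin.exists_succAbove_eq (hj a)
  refine ⟨j, r', fun a b hab => ?_, funext fun a => (hr' a).symm⟩
  rw [← (Fin.strictMono_succAbove j).lt_iff_lt, hr', hr']
  exact hr hab

namespace TotallyNonneg

theorem submatrix {n m : ℕ} {A : Matrix (Fin n) (Fin n) ℝ} (hA : TotallyNonneg A)
    {f g : Fin m → Fin n} (hf : StrictMono f) (hg : StrictMono g) :
    TotallyNonneg (A.submatrix f g) := fun k r c hr hc => by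
  rw [submatrix_submatrix]
  exact hA k (f ∘ r) (g ∘ c) (hf.comp hr) (hg.comp hc)

theorem det_pos {n : ℕ} {A : Matrix (Fin n) (Fin n) ℝ} (hA : TotallyNonneg A)
    (hdet : A.det ≠ 0) : 0 < A.det := by
  simpa using (hA n id id strictMono_id strictMono_id).lt_of_ne' (by simpa using hdet)

theorem det_submatrix_pos_of_surjective {n k : ℕ} {A : Matrix (Fin n) (Fin n) ℝ}
    (hA : TotallyNonneg A) (hdet : A.det ≠ 0) {r : Fin k → Fin n} (hr : StrictMono r)
    (hs : Surjective r) : 0 < det (A.submatrix r r) := by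
  obtain rfl : k = n := by simpa using Fintype.card_of_bijective ⟨hr.injective, hs⟩
  rw [hr.eq_id, submatrix_id_id]
  exact hA.det_pos hdet

section LastIndex

variable {m : ℕ} {A : Matrix (Fin (m + 2)) (Fin (m + 2)) ℝ}

theorem det_submatrix_castSucc_pos (hA : TotallyNonneg A) (hdet : A.det ≠ 0) :
    0 < det (A.submatrix Fin.castSucc Fin.castSucc) := by
  refine (hA _ _ _ Fin.strictMono_castSucc Fin.strictMono_castSucc).lt_of_ne' fun h0 => ?_
  obtain ⟨i, hi⟩ := exists_det_submatrix_succAbove_ne_zero_left hdet (Fin.last _)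
  obtain ⟨j, hj⟩ := exists_det_submatrix_succAbove_ne_zero_right hdet (Fin.last _)
  rw [Fin.succAbove_last] at hi hj
  have hiL : i ≠ Fin.last _ := by rintro rfl; rw [Fin.succAbove_last] at hi; exact hi h0
  have hjL : j ≠ Fin.last _ := by rintro rfl; rw [Fin.succAbove_last] at hj; exact hj h0
  obtain ⟨i, rfl⟩ := Fin.exists_castSucc_eq.mpr hiL
  obtain ⟨j, rfl⟩ := Fin.exists_castSucc_eq.mpr hjL
  have hJ := desnanot_jacobi_last hdet i j
  rw [h0, mul_zero, zero_sub] at hJ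
  have hB := hA.submatrix Fin.strictMono_castSucc Fin.strictMono_castSucc
  have h1 := mul_nonneg (hA.det_pos hdet).le
    (hB _ _ _ (Fin.strictMono_succAbove i) (Fin.strictMono_succAbove j))
  have h2 := mul_nonneg (hA _ _ _ (Fin.strictMono_succAbove i.castSucc) Fin.strictMono_castSucc)
    (hA _ _ _ Fin.strictMono_castSucc (Fin.strictMono_succAbove j.castSucc))
  exact mul_ne_zero hi hj (by linarith)

theorem det_submatrix_castSucc_succAbove_pos (hA : TotallyNonneg A) (hdet : A.det ≠ 0)
    (i : Fin (m + 1))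
    (h : 0 < det ((A.submatrix Fin.castSucc Fin.castSucc).submatrix i.succAbove i.succAbove)) :
    0 < det (A.submatrix i.castSucc.succAbove i.castSucc.succAbove) := by
  have hJ := desnanot_jacobi_last hdet i i
  have h1 := mul_pos (hA.det_pos hdet) h
  have h2 := mul_nonneg (hA _ _ _ (Fin.strictMono_succAbove i.castSucc) Fin.strictMono_castSucc)
    (hA _ _ _ Fin.strictMono_castSucc (Fin.strictMono_succAbove i.castSucc))
  exact pos_of_mul_pos_left (by linarith)
    (hA _ _ _ Fin.strictMono_castSucc Fin.strictMono_castSucc)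

end LastIndex

theorem det_submatrix_succAbove_self_pos :
    ∀ {m : ℕ} {A : Matrix (Fin (m + 1)) (Fin (m + 1)) ℝ}, TotallyNonneg A → A.det ≠ 0 →
      ∀ q : Fin (m + 1), 0 < det (A.submatrix q.succAbove q.succAbove)
  | 0, _, _, _, _ => by simp
  | m + 1, A, hA, hdet, q => by
    have hB := hA.det_submatrix_castSucc_pos hdet
    rcases Fin.eq_castSucc_or_eq_last q with ⟨i, rfl⟩ | rfl
    · exact hA.det_submatrix_castSucc_succAbove_pos hdet i
        (det_submatrix_succAbove_self_pos
          (hA.submatrix Fin.strictMono_castSucc Fin.strictMono_castSucc) hB.ne' i)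
    · rwa [Fin.succAbove_last]

end TotallyNonneg

theorem stmt8 {n : ℕ} (A : Matrix (Fin n) (Fin n) ℝ)
    (hTN : TotallyNonneg A) (hinv : A.det ≠ 0) :
    ∀ (k : ℕ) (r : Fin k → Fin n), StrictMono r → 0 < (A.submatrix r r).det := by
  induction n with
  | zero => exact fun k r hr => hTN.det_submatrix_pos_of_surjective hinv hr fun b => b.elim0
  | succ m ih =>
    intro k r hr
    by_cases hs : Surjective r
    · exact hTN.det_submatrix_pos_of_surjective hinv hr hs
    obtain ⟨j, r', hr', rfl⟩ := hr.exists_eq_succAbove_comp hs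
    rw [← submatrix_submatrix]
    exact ih _ (hTN.submatrix (Fin.strictMono_succAbove j) (Fin.strictMono_succAbove j))
      (hTN.det_submatrix_succAbove_self_pos hinv j).ne' k r' hr'
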